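/- arXiv:1712.01250 — 5 statements merged into one kernel-verified Lean document; each statement's English description precedes it below -/
import Mathlib

section
/- If P is a weakly ranked poset and f ∈ 𝒮(P) (i.e., deg f_{xy}(t) ≤ r_{xy} for all x ≤ y) is invertible in the incidence algebra I(P), then its inverse also lies in 𝒮(P). -/
open Polynomial

namespace KLS

noncomputable section

variable {P : Type*} [PartialOrder P] [LocallyFiniteOrder P] [DecidableEq P]

/-- Convolution product in the incidence algebra `I(P)`. -/
def conv (f g : P → P → Polynomial ℤ) : P → P → Polynomial ℤ :=
  fun x z => ∑ y ∈ Finset.Icc x z, f x y * g y z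

/-- The identity element `δ` of the incidence algebra. -/
def delta : P → P → Polynomial ℤ := fun x y => if x = y then 1 else 0

/-- Pointwise sum in the incidence algebra. -/
def add (f g : P → P → Polynomial ℤ) : P → P → Polynomial ℤ :=
  fun x y => f x y + g x y

/-- The bar involution `f̄_{xy}(t) = t^{r_{xy}} f_{xy}(t⁻¹)`. -/
def bar (r : P → P → ℕ) (f : P → P → Polynomial ℤ) : P → P → Polynomial ℤ :=
  fun x y => (f x y).reflect (r x y)

/-- The hat involution `ĥ_{xy}(t) = (-1)^{r_{xy}} h_{xy}(t)`. -/
def hat (r : P → P → ℕ) (f : P → P → Polynomial ℤ) : P → P → Polynomial ℤ :=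
  fun x y => (-1 : Polynomial ℤ) ^ (r x y) * f x y

/-- `r` is a weak rank function: positive on strict pairs and additive. -/
def IsWeakRank (r : P → P → ℕ) : Prop :=
  (∀ x y : P, x < y → 0 < r x y) ∧
    ∀ x y z : P, x ≤ y → y ≤ z → r x y + r y z = r x z

/-- Membership in the subring `𝒮(P)`: `deg f_{xy} ≤ r_{xy}`. -/
def InS (r : P → P → ℕ) (f : P → P → Polynomial ℤ) : Prop :=
  ∀ x y : P, x ≤ y → (f x y).natDegree ≤ r x y

/-- Membership in `𝒮_{1/2}(P)`: `f_{xx} = 1` and `deg f_{xy} < r_{xy}/2`. -/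
def InHalf (r : P → P → ℕ) (f : P → P → Polynomial ℤ) : Prop :=
  (∀ x : P, f x x = 1) ∧ ∀ x y : P, x < y → 2 * (f x y).natDegree < r x y

/-- An incidence function vanishes off the order relation. -/
def Supported (f : P → P → Polynomial ℤ) : Prop :=
  ∀ x y : P, ¬ x ≤ y → f x y = 0

/-- `κ` is a `P`-kernel: `κ ∈ 𝒮(P)`, `κ_{xx} = 1` and `κ⁻¹ = κ̄`. -/
def IsKernel (r : P → P → ℕ) (κ : P → P → Polynomial ℤ) : Prop :=
  InS r κ ∧ (∀ x : P, κ x x = 1) ∧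
    (∀ x z : P, x ≤ z → conv κ (bar r κ) x z = delta x z) ∧
    (∀ x z : P, x ≤ z → conv (bar r κ) κ x z = delta x z)

/-- if `f ∈ 𝒮(P)` is invertible, then its inverse lies in `𝒮(P)`. -/
theorem stmt_2 {P : Type*} [PartialOrder P] [LocallyFiniteOrder P] [DecidableEq P]
    (r : P → P → ℕ) (hr : IsWeakRank r)
    (f g : P → P → Polynomial ℤ) (hf : InS r f)
    (hfg : ∀ x z : P, x ≤ z → conv f g x z = delta x z)
    (hgf : ∀ x z : P, x ≤ z → conv g f x z = delta x z) :
    InS r g := by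
  -- diagonal: f x x * g x x = 1
  have hdiag : ∀ x : P, f x x * g x x = 1 := by
    intro x
    have h := hfg x x le_rfl
    simpa [conv, delta, Finset.Icc_self] using h
  have hfxx_ne : ∀ x : P, f x x ≠ 0 := by
    intro x hx
    have := hdiag x
    rw [hx, zero_mul] at this
    exact one_ne_zero this.symm
  have hfxx_deg : ∀ x : P, (f x x).natDegree = 0 := by
    intro x
    have hg0 : g x x ≠ 0 := by
      intro hx
      have := hdiag x
      rw [hx, mul_zero] at this
      exact one_ne_zero this.symm
    have := Polynomial.natDegree_mul (hfxx_ne x) hg0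
    rw [hdiag x, Polynomial.natDegree_one] at this
    omega
  have hgxx_deg : ∀ x : P, (g x x).natDegree = 0 := by
    intro x
    have hg0 : g x x ≠ 0 := by
      intro hx
      have := hdiag x
      rw [hx, mul_zero] at this
      exact one_ne_zero this.symm
    have := Polynomial.natDegree_mul (hfxx_ne x) hg0
    rw [hdiag x, Polynomial.natDegree_one] at this
    omega
  have key : ∀ n : ℕ, ∀ x z : P, x ≤ z → (Finset.Icc x z).card ≤ n →
      (g x z).natDegree ≤ r x z := by
    intro n
    induction n with
    | zero =>
      intro x z hxz hcard
      exfalso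
      have : 0 < (Finset.Icc x z).card :=
        Finset.card_pos.mpr (Finset.nonempty_Icc.mpr hxz)
      omega
    | succ n ih =>
      intro x z hxz hcard
      rcases eq_or_lt_of_le hxz with rfl | hlt
      · rw [hgxx_deg x]; exact Nat.zero_le _
      · by_cases hg0 : g x z = 0
        · rw [hg0, Polynomial.natDegree_zero]; exact Nat.zero_le _
        have hsum : f x x * g x z + ∑ y ∈ Finset.Ioc x z, f x y * g y z = 0 := by
          have h := hfg x z hxz
          rw [conv, Finset.Icc_eq_cons_Ioc hxz, Finset.sum_cons] at h
          rw [h]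
          simp [delta, ne_of_lt hlt]
        have heq : f x x * g x z = -∑ y ∈ Finset.Ioc x z, f x y * g y z := by
          rw [eq_neg_iff_add_eq_zero]; exact hsum
        have hbound : (f x x * g x z).natDegree ≤ r x z := by
          rw [heq, Polynomial.natDegree_neg]
          apply Polynomial.natDegree_sum_le_of_forall_le
          intro y hy
          rw [Finset.mem_Ioc] at hy
          have hxy : x < y := hy.1
          have hyz : y ≤ z := hy.2
          have hIH : (g y z).natDegree ≤ r y z := by
            apply ih y z hyz
            have hss : Finset.Icc y z ⊂ Finset.Icc x z := by
              constructor
              · exact Finset.Icc_subset_Icc_left (le_of_lt hxy)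
              · intro hsub
                have hx : x ∈ Finset.Icc x z := Finset.mem_Icc.mpr ⟨le_rfl, hxz⟩
                have := Finset.mem_Icc.mp (hsub hx)
                exact absurd this.1 (not_le_of_gt hxy)
            have := Finset.card_lt_card hss
            omega
          calc (f x y * g y z).natDegree ≤ (f x y).natDegree + (g y z).natDegree :=
                Polynomial.natDegree_mul_le
            _ ≤ r x y + r y z := Nat.add_le_add (hf x y (le_of_lt hxy)) hIH
            _ = r x z := hr.2 x y z (le_of_lt hxy) hyz
        rwa [Polynomial.natDegree_mul (hfxx_ne x) hg0, hfxx_deg x, zero_add] at hbound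
  intro x z hxz
  exact key (Finset.Icc x z).card x z hxz le_rfl
end
end KLS
end

section
/- Given a P-kernel κ on a weakly ranked poset P, there exists a unique f ∈ 𝒮_{1/2}(P) such that f̄ = κf, where 𝒮_{1/2}(P) consists of g ∈ 𝒮(P) with g_{xx}(t) = 1 for all x and deg g_{xy}(t) < r_{xy}/2 for all x < y. (Existence and uniqueness of the right Kazhdan-Lusztig-Stanley function.) -/
open Polynomial

namespace KLS

noncomputable section

variable {P : Type*} [PartialOrder P] [LocallyFiniteOrder P] [DecidableEq P]

/-! ### Auxiliary material -/

lemma reflect_zero' (p : Polynomial ℤ) : p.reflect 0 = p := by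
  ext i
  rw [Polynomial.coeff_reflect]
  rcases Nat.eq_zero_or_pos i with h | h
  · subst h; simp
  · rw [Polynomial.revAt_eq_self_of_lt h]

lemma reflect_sum {ι : Type*} (s : Finset ι) (f : ι → Polynomial ℤ) (N : ℕ) :
    (∑ i ∈ s, f i).reflect N = ∑ i ∈ s, (f i).reflect N := by
  classical
  induction s using Finset.cons_induction with
  | empty => simp
  | cons a s ha ih => rw [Finset.sum_cons, Finset.sum_cons, Polynomial.reflect_add, ih]

/-- Solve `reflect r p = p + q` for antisymmetric `q`. -/
def solve (r : ℕ) (q : Polynomial ℤ) : Polynomial ℤ :=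
  -∑ i ∈ Finset.range ((r + 1) / 2), Polynomial.monomial i (q.coeff i)

lemma solve_coeff (r : ℕ) (q : Polynomial ℤ) (j : ℕ) :
    (solve r q).coeff j = if 2 * j < r then -q.coeff j else 0 := by
  unfold solve
  rw [Polynomial.coeff_neg, Polynomial.finset_sum_coeff]
  simp only [Polynomial.coeff_monomial]
  rw [Finset.sum_ite_eq' (Finset.range ((r + 1) / 2)) j (fun i => q.coeff i)]
  have h : j < (r + 1) / 2 ↔ 2 * j < r := by omega
  by_cases hj : 2 * j < r
  · rw [if_pos (Finset.mem_range.mpr (h.mpr hj)), if_pos hj]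
  · rw [if_neg (fun hh => hj (h.mp (Finset.mem_range.mp hh))), if_neg hj, neg_zero]

lemma solve_natDegree {r : ℕ} (hr : 1 ≤ r) (q : Polynomial ℤ) :
    2 * (solve r q).natDegree < r := by
  have h : (solve r q).natDegree ≤ (r - 1) / 2 := by
    rw [Polynomial.natDegree_le_iff_coeff_eq_zero]
    intro m hm
    rw [solve_coeff]
    have : ¬ 2 * m < r := by omega
    simp [this]
  omega

lemma solve_spec {r : ℕ} {q : Polynomial ℤ} (hq : q.reflect r = -q)
    (hdeg : q.natDegree ≤ r) : (solve r q).reflect r = solve r q + q := by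
  have hqc : ∀ i, i ≤ r → q.coeff (r - i) = -q.coeff i := by
    intro i hi
    have h := congrArg (fun p => Polynomial.coeff p i) hq
    simpa [Polynomial.coeff_reflect, Polynomial.revAt_le hi] using h
  have hq0 : ∀ i, r < i → q.coeff i = 0 := fun i hi =>
    Polynomial.coeff_eq_zero_of_natDegree_lt (lt_of_le_of_lt hdeg hi)
  ext j
  simp only [Polynomial.coeff_reflect, Polynomial.coeff_add, solve_coeff]
  rcases le_or_gt j r with hj | hj
  · rw [Polynomial.revAt_le hj]
    rcases lt_trichotomy (2 * j) r with h | h | h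
    · have h1 : ¬ 2 * (r - j) < r := by omega
      rw [if_neg h1, if_pos h]
      ring
    · have hrj : r - j = j := by omega
      have h2 := hqc j hj
      rw [hrj] at h2
      have h0 : q.coeff j = 0 := by linarith
      have h1 : ¬ 2 * (r - j) < r := by omega
      have h3 : ¬ 2 * j < r := by omega
      rw [if_neg h1, if_neg h3, h0, add_zero]
    · have h1 : 2 * (r - j) < r := by omega
      have h3 : ¬ 2 * j < r := by omega
      rw [if_pos h1, if_neg h3, hqc j hj, neg_neg, zero_add]
  · rw [Polynomial.revAt_eq_self_of_lt hj]
    have h1 : ¬ 2 * j < r := by omega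
    rw [if_neg h1, hq0 j hj, add_zero]

lemma eq_zero_of_reflect_self {r : ℕ} {p : Polynomial ℤ} (h : p.reflect r = p)
    (hd : 2 * p.natDegree < r) : p = 0 := by
  ext j
  rw [Polynomial.coeff_zero]
  rcases lt_or_ge (2 * j) r with hj | hj
  · have hjr : j ≤ r := by omega
    have h2 := congrArg (fun q => Polynomial.coeff q j) h
    simp only [Polynomial.coeff_reflect, Polynomial.revAt_le hjr] at h2
    rw [← h2]
    apply Polynomial.coeff_eq_zero_of_natDegree_lt
    omega
  · apply Polynomial.coeff_eq_zero_of_natDegree_lt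
    omega

lemma rank_self_eq_zero {r : P → P → ℕ} (hr : IsWeakRank r) (x : P) : r x x = 0 := by
  have := hr.2 x x x le_rfl le_rfl; omega

lemma card_Icc_lt {x y z : P} (hxy : x ≤ y) (hyz : y ≤ z) (hne : x ≠ y) :
    (Finset.Icc y z).card < (Finset.Icc x z).card := by
  apply Finset.card_lt_card
  rw [Finset.ssubset_iff_of_subset (Finset.Icc_subset_Icc_left hxy)]
  refine ⟨x, Finset.mem_Icc.mpr ⟨le_rfl, hxy.trans hyz⟩, fun hx => ?_⟩
  exact hne (le_antisymm hxy (Finset.mem_Icc.mp hx).1)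

open scoped Classical in
/-- The KLS function, defined by well-founded recursion on the interval size. -/
def kls (r : P → P → ℕ) (κ : P → P → Polynomial ℤ) (x z : P) : Polynomial ℤ :=
  if x = z then 1
  else if x ≤ z then
    solve (r x z) (∑ y ∈ ((Finset.Icc x z).erase x).attach, κ x y.1 * kls r κ y.1 z)
  else 0
termination_by (Finset.Icc x z).card
decreasing_by
  have hy := y.2
  rw [Finset.mem_erase, Finset.mem_Icc] at hy
  exact card_Icc_lt hy.2.1 hy.2.2 (Ne.symm hy.1)

lemma kls_self (r : P → P → ℕ) (κ : P → P → Polynomial ℤ) (x : P) :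
    kls r κ x x = 1 := by
  rw [kls]; simp

lemma kls_not_le {r : P → P → ℕ} {κ : P → P → Polynomial ℤ} {x z : P} (h : ¬ x ≤ z) :
    kls r κ x z = 0 := by
  rw [kls, if_neg (fun he => h (le_of_eq he)), if_neg h]

lemma kls_of_lt {r : P → P → ℕ} {κ : P → P → Polynomial ℤ} {x z : P} (h : x < z) :
    kls r κ x z
      = solve (r x z) (∑ y ∈ (Finset.Icc x z).erase x, κ x y * kls r κ y z) := by
  rw [kls, if_neg (ne_of_lt h), if_pos h.le,
    Finset.sum_attach ((Finset.Icc x z).erase x) (fun y => κ x y * kls r κ y z)]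

lemma kls_main {r : P → P → ℕ} (hr : IsWeakRank r) {κ : P → P → Polynomial ℤ}
    (hκ : IsKernel r κ) :
    ∀ n : ℕ, ∀ x z : P, x ≤ z → (Finset.Icc x z).card ≤ n →
      (kls r κ x z).natDegree ≤ r x z ∧
      (x < z → 2 * (kls r κ x z).natDegree < r x z) ∧
      (kls r κ x z).reflect (r x z) = conv κ (kls r κ) x z := by
  classical
  intro n
  induction n with
  | zero =>
    intro x z hxz hcard
    have : 0 < (Finset.Icc x z).card :=
      Finset.card_pos.mpr ⟨x, Finset.mem_Icc.mpr ⟨le_rfl, hxz⟩⟩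
    omega
  | succ n ih =>
    intro x z hxz hcard
    rcases eq_or_lt_of_le hxz with rfl | hlt
    · refine ⟨?_, fun h => absurd h (lt_irrefl x), ?_⟩
      · rw [kls_self]; simp
      · rw [kls_self, rank_self_eq_zero hr, reflect_zero']
        rw [conv, Finset.Icc_self, Finset.sum_singleton, hκ.2.1 x, kls_self, mul_one]
    · have hmem : ∀ y ∈ (Finset.Icc x z).erase x, x ≤ y ∧ y ≤ z ∧ y ≠ x := by
        intro y hy
        rw [Finset.mem_erase, Finset.mem_Icc] at hy
        exact ⟨hy.2.1, hy.2.2, hy.1⟩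
      have hcards : ∀ y ∈ (Finset.Icc x z).erase x, (Finset.Icc y z).card ≤ n := by
        intro y hy
        obtain ⟨h1, h2, h3⟩ := hmem y hy
        have := card_Icc_lt h1 h2 (Ne.symm h3)
        omega
      have ihdeg : ∀ y ∈ (Finset.Icc x z).erase x,
          (kls r κ y z).natDegree ≤ r y z := fun y hy =>
        (ih y z (hmem y hy).2.1 (hcards y hy)).1
      have ihbar : ∀ y ∈ (Finset.Icc x z).erase x,
          (kls r κ y z).reflect (r y z) = conv κ (kls r κ) y z := fun y hy =>
        (ih y z (hmem y hy).2.1 (hcards y hy)).2.2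
      set q : Polynomial ℤ := ∑ y ∈ (Finset.Icc x z).erase x, κ x y * kls r κ y z
        with hqdef
      have hqdeg : q.natDegree ≤ r x z := by
        apply Polynomial.natDegree_sum_le_of_forall_le
        intro y hy
        obtain ⟨h1, h2, _⟩ := hmem y hy
        calc (κ x y * kls r κ y z).natDegree
            ≤ (κ x y).natDegree + (kls r κ y z).natDegree := Polynomial.natDegree_mul_le
          _ ≤ r x y + r y z := Nat.add_le_add (hκ.1 x y h1) (ihdeg y hy)
          _ = r x z := hr.2 x y z h1 h2
      have hxmem : x ∈ Finset.Icc x z := Finset.mem_Icc.mpr ⟨le_rfl, hxz⟩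
      have hconv_eq : conv κ (kls r κ) x z = kls r κ x z + q := by
        rw [conv, ← Finset.add_sum_erase (Finset.Icc x z)
          (fun y => κ x y * kls r κ y z) hxmem, hκ.2.1 x, one_mul, hqdef]
      have hqref : q.reflect (r x z) = -q := by
        have e1 : q.reflect (r x z)
            = ∑ y ∈ (Finset.Icc x z).erase x,
                (κ x y).reflect (r x y) * conv κ (kls r κ) y z := by
          rw [hqdef, reflect_sum]
          refine Finset.sum_congr rfl (fun y hy => ?_)
          obtain ⟨h1, h2, _⟩ := hmem y hy
          rw [← hr.2 x y z h1 h2,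
            Polynomial.reflect_mul _ _ (hκ.1 x y h1) (ihdeg y hy), ihbar y hy]
        have e2 : ∀ y ∈ (Finset.Icc x z).erase x,
            (κ x y).reflect (r x y) * conv κ (kls r κ) y z
              = ∑ w ∈ Finset.Icc x z, if y ≤ w then
                  (κ x y).reflect (r x y) * (κ y w * kls r κ w z) else 0 := by
          intro y hy
          obtain ⟨h1, h2, _⟩ := hmem y hy
          have hicc : Finset.Icc y z = (Finset.Icc x z).filter (fun w => y ≤ w) := by
            ext w
            simp only [Finset.mem_Icc, Finset.mem_filter]
            exact ⟨fun hw => ⟨⟨h1.trans hw.1, hw.2⟩, hw.1⟩, fun hw => ⟨hw.2, hw.1.2⟩⟩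
          rw [conv, Finset.mul_sum, ← Finset.sum_filter, ← hicc]
        have e3 : ∀ w ∈ Finset.Icc x z,
            (∑ y ∈ (Finset.Icc x z).erase x, if y ≤ w then
                (κ x y).reflect (r x y) * (κ y w * kls r κ w z) else 0)
              = (delta x w - κ x w) * kls r κ w z := by
          intro w hw
          rw [Finset.mem_Icc] at hw
          have hicc : (Finset.Icc x w).erase x
              = ((Finset.Icc x z).erase x).filter (fun y => y ≤ w) := by
            ext y
            simp only [Finset.mem_erase, Finset.mem_Icc, Finset.mem_filter]
            exact ⟨fun hy => ⟨⟨hy.1, hy.2.1, hy.2.2.trans hw.2⟩, hy.2.2⟩,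
              fun hy => ⟨hy.1.1, hy.1.2.1, hy.2⟩⟩
          rw [← Finset.sum_filter, ← hicc]
          have e4 : ∑ y ∈ (Finset.Icc x w).erase x,
              (κ x y).reflect (r x y) * (κ y w * kls r κ w z)
                = (∑ y ∈ (Finset.Icc x w).erase x,
                    (κ x y).reflect (r x y) * κ y w) * kls r κ w z := by
            rw [Finset.sum_mul]
            exact Finset.sum_congr rfl (fun y _ => by ring)
          rw [e4]
          congr 1
          have hxmw : x ∈ Finset.Icc x w := Finset.mem_Icc.mpr ⟨le_rfl, hw.1⟩
          have e5 : (κ x x).reflect (r x x) * κ x w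
              + ∑ y ∈ (Finset.Icc x w).erase x, (κ x y).reflect (r x y) * κ y w
                = conv (bar r κ) κ x w :=
            Finset.add_sum_erase _ (fun y => (κ x y).reflect (r x y) * κ y w) hxmw
          rw [hκ.2.2.2 x w hw.1, rank_self_eq_zero hr, reflect_zero', hκ.2.1 x,
            one_mul] at e5
          exact eq_sub_of_add_eq' e5
        rw [e1, Finset.sum_congr rfl e2, Finset.sum_comm, Finset.sum_congr rfl e3]
        have e6 : ∑ w ∈ Finset.Icc x z, (delta x w - κ x w) * kls r κ w z
            = (∑ w ∈ Finset.Icc x z, delta x w * kls r κ w z)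
              - ∑ w ∈ Finset.Icc x z, κ x w * kls r κ w z := by
          rw [← Finset.sum_sub_distrib]
          exact Finset.sum_congr rfl (fun w _ => by ring)
        rw [e6]
        have e7 : ∑ w ∈ Finset.Icc x z, delta x w * kls r κ w z = kls r κ x z := by
          simp only [delta, ite_mul, one_mul, zero_mul]
          rw [Finset.sum_ite_eq, if_pos hxmem]
        have e8 : ∑ w ∈ Finset.Icc x z, κ x w * kls r κ w z = kls r κ x z + q :=
          hconv_eq
        rw [e7, e8]
        ring
      have hk : kls r κ x z = solve (r x z) q := kls_of_lt hlt
      have hdeg2 : 2 * (kls r κ x z).natDegree < r x z := by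
        rw [hk]; exact solve_natDegree (hr.1 x z hlt) q
      refine ⟨by omega, fun _ => hdeg2, ?_⟩
      rw [hconv_eq, hk]
      exact solve_spec hqref hqdeg

lemma kls_unique {r : P → P → ℕ} (hr : IsWeakRank r) {κ : P → P → Polynomial ℤ}
    (hκ : IsKernel r κ) {f : P → P → Polynomial ℤ} (hsupp : Supported f)
    (hhalf : InHalf r f)
    (hbar : ∀ x z : P, x ≤ z → bar r f x z = conv κ f x z) :
    ∀ n : ℕ, ∀ x z : P, (Finset.Icc x z).card ≤ n → f x z = kls r κ x z := by
  intro n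
  induction n with
  | zero =>
    intro x z hcard
    by_cases hxz : x ≤ z
    · have : 0 < (Finset.Icc x z).card :=
        Finset.card_pos.mpr ⟨x, Finset.mem_Icc.mpr ⟨le_rfl, hxz⟩⟩
      omega
    · rw [hsupp x z hxz, kls_not_le hxz]
  | succ n ih =>
    intro x z hcard
    by_cases hxz : x ≤ z
    · rcases eq_or_lt_of_le hxz with rfl | hlt
      · rw [hhalf.1 x, kls_self]
      · have hxmem : x ∈ Finset.Icc x z := Finset.mem_Icc.mpr ⟨le_rfl, hxz⟩
        have hfy : ∀ y ∈ (Finset.Icc x z).erase x, f y z = kls r κ y z := by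
          intro y hy
          rw [Finset.mem_erase, Finset.mem_Icc] at hy
          have := card_Icc_lt hy.2.1 hy.2.2 (Ne.symm hy.1)
          exact ih y z (by omega)
        set q : Polynomial ℤ := ∑ y ∈ (Finset.Icc x z).erase x, κ x y * kls r κ y z
          with hqdef
        have hf : (f x z).reflect (r x z) = f x z + q := by
          have h1 := hbar x z hxz
          simp only [bar, conv] at h1
          rw [← Finset.add_sum_erase (Finset.Icc x z)
            (fun y => κ x y * f y z) hxmem, hκ.2.1 x, one_mul] at h1
          rw [h1, hqdef]
          congr 1
          exact Finset.sum_congr rfl (fun y hy => by rw [hfy y hy])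
        have hk : (kls r κ x z).reflect (r x z) = kls r κ x z + q := by
          have h2 := (kls_main hr hκ ((Finset.Icc x z).card) x z hxz le_rfl).2.2
          rw [conv, ← Finset.add_sum_erase (Finset.Icc x z)
            (fun y => κ x y * kls r κ y z) hxmem, hκ.2.1 x, one_mul] at h2
          rw [h2, hqdef]
        have hd : 2 * (f x z - kls r κ x z).natDegree < r x z := by
          have hd1 := hhalf.2 x z hlt
          have hd2 := (kls_main hr hκ ((Finset.Icc x z).card) x z hxz le_rfl).2.1 hlt
          have hd3 := Polynomial.natDegree_sub_le (f x z) (kls r κ x z)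
          omega
        have hrf : (f x z - kls r κ x z).reflect (r x z) = f x z - kls r κ x z := by
          rw [Polynomial.reflect_sub, hf, hk]; ring
        exact sub_eq_zero.mp (eq_zero_of_reflect_self hrf hd)
    · rw [hsupp x z hxz, kls_not_le hxz]

/-- existence and uniqueness of the right KLS-function of a `P`-kernel. -/
theorem stmt_5 {P : Type*} [PartialOrder P] [LocallyFiniteOrder P] [DecidableEq P]
    (r : P → P → ℕ) (hr : IsWeakRank r)
    (κ : P → P → Polynomial ℤ) (hκ : IsKernel r κ) :
    ∃! f : P → P → Polynomial ℤ,
      Supported f ∧ InHalf r f ∧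
        ∀ x z : P, x ≤ z → bar r f x z = conv κ f x z := by
  refine ⟨kls r κ, ⟨fun x y h => kls_not_le h,
    ⟨kls_self r κ, fun x y h =>
      (kls_main hr hκ (Finset.Icc x y).card x y h.le le_rfl).2.1 h⟩,
    fun x z hxz => (kls_main hr hκ (Finset.Icc x z).card x z hxz le_rfl).2.2⟩, ?_⟩
  intro f hf
  funext x z
  exact kls_unique hr hκ hf.1 hf.2.1 hf.2.2 (Finset.Icc x z).card x z le_rfl

end

end KLS
end

section
/- If f ∈ 𝒮_{1/2}(P), then f is invertible in the incidence algebra and f̄ f^{-1} is a P-kernel whose associated right Kazhdan-Lusztig-Stanley function is f itself. -/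
open Polynomial

namespace KLS

noncomputable section

variable {P : Type*} [PartialOrder P] [LocallyFiniteOrder P] [DecidableEq P]

set_option linter.unusedSectionVars false
-- helper lemmas

lemma reflect_reflect' (N : ℕ) (p : Polynomial ℤ) : (p.reflect N).reflect N = p := by
  ext i; simp

lemma natDegree_reflect_le {N : ℕ} {p : Polynomial ℤ} (h : p.natDegree ≤ N) :
    (p.reflect N).natDegree ≤ N := by
  rw [Polynomial.natDegree_le_iff_coeff_eq_zero] at h ⊢
  intro m hm
  rw [Polynomial.coeff_reflect, Polynomial.revAt_eq_self_of_lt hm]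
  exact h m hm

lemma card_Icc_lt_left {x y z : P} (hxy : x < y) (hyz : y ≤ z) :
    (Finset.Icc y z).card < (Finset.Icc x z).card := by
  refine Finset.card_lt_card ?_
  rw [Finset.ssubset_iff_of_subset (Finset.Icc_subset_Icc_left hxy.le)]
  exact ⟨x, Finset.mem_Icc.mpr ⟨le_rfl, hxy.le.trans hyz⟩,
    fun hx => absurd (Finset.mem_Icc.mp hx).1 hxy.not_ge⟩

lemma card_Icc_lt_right {x y z : P} (hxy : x ≤ y) (hyz : y < z) :
    (Finset.Icc x y).card < (Finset.Icc x z).card := by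
  refine Finset.card_lt_card ?_
  rw [Finset.ssubset_iff_of_subset (Finset.Icc_subset_Icc_right hyz.le)]
  exact ⟨z, Finset.mem_Icc.mpr ⟨hxy.trans hyz.le, le_rfl⟩,
    fun hz => absurd (Finset.mem_Icc.mp hz).2 hyz.not_ge⟩

set_option linter.unusedSectionVars false

open scoped Classical in
noncomputable def rinv (f : P → P → Polynomial ℤ) (x z : P) : Polynomial ℤ :=
  if x = z then 1
  else if hx : x < z then
    -∑ y ∈ ((Finset.Icc x z).erase x).attach, f x y.1 * rinv f y.1 z
  else 0
termination_by (Finset.Icc x z).card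
decreasing_by
  obtain ⟨hne, hmem⟩ := Finset.mem_erase.mp y.2
  obtain ⟨h1, h2⟩ := Finset.mem_Icc.mp hmem
  exact card_Icc_lt_left (lt_of_le_of_ne h1 (Ne.symm hne)) h2

open scoped Classical in
noncomputable def linv (f : P → P → Polynomial ℤ) (x z : P) : Polynomial ℤ :=
  if x = z then 1
  else if hx : x < z then
    -∑ y ∈ ((Finset.Icc x z).erase z).attach, linv f x y.1 * f y.1 z
  else 0
termination_by (Finset.Icc x z).card
decreasing_by
  obtain ⟨hne, hmem⟩ := Finset.mem_erase.mp y.2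
  obtain ⟨h1, h2⟩ := Finset.mem_Icc.mp hmem
  exact card_Icc_lt_right h1 (lt_of_le_of_ne h2 hne)

lemma rinv_self (f : P → P → Polynomial ℤ) (x : P) : rinv f x x = 1 := by
  rw [rinv]; simp

lemma rinv_not_le (f : P → P → Polynomial ℤ) {x z : P} (h : ¬ x ≤ z) : rinv f x z = 0 := by
  rw [rinv, if_neg (fun he : x = z => h (he ▸ le_rfl)), dif_neg (fun hl => h hl.le)]

lemma rinv_eq (f : P → P → Polynomial ℤ) {x z : P} (h : x < z) :
    rinv f x z = -∑ y ∈ (Finset.Icc x z).erase x, f x y * rinv f y z := by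
  rw [rinv, if_neg h.ne, dif_pos h, ← Finset.sum_attach ((Finset.Icc x z).erase x)
    (fun y => f x y * rinv f y z)]

lemma linv_self (f : P → P → Polynomial ℤ) (x : P) : linv f x x = 1 := by
  rw [linv]; simp

lemma linv_not_le (f : P → P → Polynomial ℤ) {x z : P} (h : ¬ x ≤ z) : linv f x z = 0 := by
  rw [linv, if_neg (fun he : x = z => h (he ▸ le_rfl)), dif_neg (fun hl => h hl.le)]

lemma linv_eq (f : P → P → Polynomial ℤ) {x z : P} (h : x < z) :
    linv f x z = -∑ y ∈ (Finset.Icc x z).erase z, linv f x y * f y z := by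
  rw [linv, if_neg h.ne, dif_pos h, ← Finset.sum_attach ((Finset.Icc x z).erase z)
    (fun y => linv f x y * f y z)]

lemma conv_f_rinv (f : P → P → Polynomial ℤ) (hf1 : ∀ x : P, f x x = 1) :
    conv f (rinv f) = delta := by
  funext x z
  unfold conv delta
  rcases eq_or_ne x z with rfl | hne
  · simp [hf1, rinv_self]
  rw [if_neg hne]
  by_cases hle : x ≤ z
  · have hlt : x < z := lt_of_le_of_ne hle hne
    have hx : x ∈ Finset.Icc x z := Finset.mem_Icc.mpr ⟨le_rfl, hle⟩
    rw [← Finset.add_sum_erase _ _ hx, hf1, one_mul, rinv_eq f hlt, neg_add_cancel]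
  · rw [Finset.Icc_eq_empty hle, Finset.sum_empty]

lemma conv_linv_f (f : P → P → Polynomial ℤ) (hf1 : ∀ x : P, f x x = 1) :
    conv (linv f) f = delta := by
  funext x z
  unfold conv delta
  rcases eq_or_ne x z with rfl | hne
  · simp [hf1, linv_self]
  rw [if_neg hne]
  by_cases hle : x ≤ z
  · have hlt : x < z := lt_of_le_of_ne hle hne
    have hz : z ∈ Finset.Icc x z := Finset.mem_Icc.mpr ⟨hle, le_rfl⟩
    rw [← Finset.sum_erase_add _ _ hz, hf1, mul_one, linv_eq f hlt, add_neg_cancel]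
  · rw [Finset.Icc_eq_empty hle, Finset.sum_empty]

lemma delta_conv (g : P → P → Polynomial ℤ) {x z : P} (h : x ≤ z) :
    conv delta g x z = g x z := by
  unfold conv delta
  rw [Finset.sum_eq_single_of_mem x (Finset.mem_Icc.mpr ⟨le_rfl, h⟩)]
  · rw [if_pos rfl, one_mul]
  · intro y _ hne
    rw [if_neg (fun he => hne he.symm), zero_mul]

lemma conv_delta (g : P → P → Polynomial ℤ) {x z : P} (h : x ≤ z) :
    conv g delta x z = g x z := by
  unfold conv delta
  rw [Finset.sum_eq_single_of_mem z (Finset.mem_Icc.mpr ⟨h, le_rfl⟩)]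
  · rw [if_pos rfl, mul_one]
  · intro y _ hne
    rw [if_neg hne, mul_zero]

lemma conv_congr_left {a a' b : P → P → Polynomial ℤ} {x z : P}
    (h : ∀ y, x ≤ y → y ≤ z → a x y = a' x y) : conv a b x z = conv a' b x z := by
  unfold conv
  refine Finset.sum_congr rfl fun y hy => ?_
  obtain ⟨h1, h2⟩ := Finset.mem_Icc.mp hy
  rw [h y h1 h2]

lemma conv_congr_right {a b b' : P → P → Polynomial ℤ} {x z : P}
    (h : ∀ y, x ≤ y → y ≤ z → b y z = b' y z) : conv a b x z = conv a b' x z := by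
  unfold conv
  refine Finset.sum_congr rfl fun y hy => ?_
  obtain ⟨h1, h2⟩ := Finset.mem_Icc.mp hy
  rw [h y h1 h2]

lemma conv_assoc (a b c : P → P → Polynomial ℤ) (x z : P) :
    conv (conv a b) c x z = conv a (conv b c) x z := by
  classical
  unfold conv
  simp_rw [Finset.sum_mul, Finset.mul_sum, mul_assoc]
  calc ∑ y ∈ Finset.Icc x z, ∑ w ∈ Finset.Icc x y, a x w * (b w y * c y z)
      = ∑ y ∈ Finset.Icc x z, ∑ w ∈ Finset.Icc x z,
          if w ≤ y then a x w * (b w y * c y z) else 0 := by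
        refine Finset.sum_congr rfl fun y hy => ?_
        obtain ⟨h1, h2⟩ := Finset.mem_Icc.mp hy
        rw [← Finset.sum_filter]
        refine Finset.sum_congr ?_ fun _ _ => rfl
        ext w
        simp only [Finset.mem_Icc, Finset.mem_filter]
        exact ⟨fun ⟨hw1, hw2⟩ => ⟨⟨hw1, hw2.trans h2⟩, hw2⟩, fun ⟨⟨hw1, _⟩, hw3⟩ => ⟨hw1, hw3⟩⟩
    _ = ∑ w ∈ Finset.Icc x z, ∑ y ∈ Finset.Icc x z,
          if w ≤ y then a x w * (b w y * c y z) else 0 := Finset.sum_comm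
    _ = ∑ w ∈ Finset.Icc x z, ∑ y ∈ Finset.Icc w z, a x w * (b w y * c y z) := by
        refine Finset.sum_congr rfl fun w hw => ?_
        obtain ⟨h1, h2⟩ := Finset.mem_Icc.mp hw
        rw [← Finset.sum_filter]
        refine Finset.sum_congr ?_ fun _ _ => rfl
        ext y
        simp only [Finset.mem_Icc, Finset.mem_filter]
        exact ⟨fun ⟨⟨_, hy2⟩, hy3⟩ => ⟨hy3, hy2⟩, fun ⟨hy1, hy2⟩ => ⟨⟨h1.trans hy1, hy2⟩, hy1⟩⟩

lemma bar_conv {r : P → P → ℕ} (hr : IsWeakRank r) {a b : P → P → Polynomial ℤ}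
    (ha : ∀ x y : P, x ≤ y → (a x y).natDegree ≤ r x y)
    (hb : ∀ x y : P, x ≤ y → (b x y).natDegree ≤ r x y)
    (x z : P) (hxz : x ≤ z) :
    bar r (conv a b) x z = conv (bar r a) (bar r b) x z := by
  unfold bar conv
  calc (∑ y ∈ Finset.Icc x z, a x y * b y z).reflect (r x z)
      = ∑ y ∈ Finset.Icc x z, (a x y * b y z).reflect (r x z) := by
        ext i
        simp [Polynomial.coeff_reflect, Polynomial.finset_sum_coeff]
    _ = ∑ y ∈ Finset.Icc x z, (a x y).reflect (r x y) * (b y z).reflect (r y z) := by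
        refine Finset.sum_congr rfl fun y hy => ?_
        obtain ⟨h1, h2⟩ := Finset.mem_Icc.mp hy
        rw [← hr.2 x y z h1 h2, Polynomial.reflect_mul _ _ (ha x y h1) (hb y z h2)]

lemma bar_delta {r : P → P → ℕ} (hr : IsWeakRank r) (x z : P) :
    bar r delta x z = delta x z := by
  unfold bar delta
  rcases eq_or_ne x z with rfl | hne
  · rw [if_pos rfl, rank_self_eq_zero hr, reflect_zero']
  · rw [if_neg hne, Polynomial.reflect_zero]


lemma linv_eq_rinv (f : P → P → Polynomial ℤ) (hf1 : ∀ x : P, f x x = 1) :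
    linv f = rinv f := by
  funext x z
  by_cases hle : x ≤ z
  · calc linv f x z = conv (linv f) delta x z := (conv_delta _ hle).symm
      _ = conv (linv f) (conv f (rinv f)) x z := by rw [conv_f_rinv f hf1]
      _ = conv (conv (linv f) f) (rinv f) x z := (conv_assoc _ _ _ _ _).symm
      _ = conv delta (rinv f) x z := by rw [conv_linv_f f hf1]
      _ = rinv f x z := delta_conv _ hle
  · rw [linv_not_le f hle, rinv_not_le f hle]

lemma rinv_deg {r : P → P → ℕ} (hr : IsWeakRank r) {f : P → P → Polynomial ℤ}
    (hf : InHalf r f) : ∀ x z : P, x < z → 2 * (rinv f x z).natDegree < r x z := by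
  suffices H : ∀ n : ℕ, ∀ x z : P, (Finset.Icc x z).card ≤ n → x < z →
      2 * (rinv f x z).natDegree < r x z from fun x z h => H _ x z le_rfl h
  intro n
  induction n with
  | zero =>
    intro x z hc hlt
    have hx : x ∈ Finset.Icc x z := Finset.mem_Icc.mpr ⟨le_rfl, hlt.le⟩
    rw [Nat.le_zero, Finset.card_eq_zero] at hc
    rw [hc] at hx
    exact absurd hx (Finset.notMem_empty x)
  | succ n ih =>
    intro x z hc hlt
    rw [rinv_eq f hlt, Polynomial.natDegree_neg]
    have hR : 0 < r x z := hr.1 x z hlt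
    have key : ∀ y ∈ (Finset.Icc x z).erase x,
        (f x y * rinv f y z).natDegree ≤ (r x z - 1) / 2 := by
      intro y hy
      obtain ⟨hne, hmem⟩ := Finset.mem_erase.mp hy
      obtain ⟨h1, h2⟩ := Finset.mem_Icc.mp hmem
      have hxy : x < y := lt_of_le_of_ne h1 (Ne.symm hne)
      have hmul := Polynomial.natDegree_mul_le (p := f x y) (q := rinv f y z)
      have hd1 := hf.2 x y hxy
      have hadd := hr.2 x y z hxy.le h2
      rcases eq_or_lt_of_le h2 with rfl | hyz
      · rw [rinv_self, mul_one]
        omega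
      · have hcard : (Finset.Icc y z).card ≤ n := by
          have := card_Icc_lt_left hxy h2
          omega
        have hd2 := ih y z hcard hyz
        omega
    have hsum := Polynomial.natDegree_sum_le_of_forall_le _ _ key
    omega

lemma degf_le {r : P → P → ℕ} {f : P → P → Polynomial ℤ} (hf : InHalf r f) :
    ∀ x y : P, x ≤ y → (f x y).natDegree ≤ r x y := by
  intro x y hxy
  rcases eq_or_lt_of_le hxy with rfl | hlt
  · rw [hf.1, Polynomial.natDegree_one]
    exact Nat.zero_le _
  · have := hf.2 x y hlt
    omega

lemma degrinv_le {r : P → P → ℕ} (hr : IsWeakRank r) {f : P → P → Polynomial ℤ}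
    (hf : InHalf r f) :
    ∀ x y : P, x ≤ y → (rinv f x y).natDegree ≤ r x y := by
  intro x y hxy
  rcases eq_or_lt_of_le hxy with rfl | hlt
  · rw [rinv_self, Polynomial.natDegree_one]
    exact Nat.zero_le _
  · have := rinv_deg hr hf x y hlt
    omega

/-- for `f ∈ 𝒮_{1/2}(P)`, `f` is invertible and `f̄ f⁻¹` is a `P`-kernel
whose right KLS-function is `f`. -/
theorem stmt_7 {P : Type*} [PartialOrder P] [LocallyFiniteOrder P] [DecidableEq P]
    (r : P → P → ℕ) (hr : IsWeakRank r)
    (f : P → P → Polynomial ℤ) (hf : InHalf r f) (hsupp : Supported f) :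
    ∃ finv : P → P → Polynomial ℤ,
      Supported finv ∧
      (∀ x z : P, x ≤ z → conv f finv x z = delta x z) ∧
      (∀ x z : P, x ≤ z → conv finv f x z = delta x z) ∧
      IsKernel r (conv (bar r f) finv) ∧
      (∀ x z : P, x ≤ z →
        bar r f x z = conv (conv (bar r f) finv) f x z) := by
  have hf1 := hf.1
  have Hr : conv f (rinv f) = delta := conv_f_rinv f hf1
  have Hl : conv (rinv f) f = delta := by
    rw [← linv_eq_rinv f hf1]
    exact conv_linv_f f hf1
  have degf : ∀ x y : P, x ≤ y → (f x y).natDegree ≤ r x y := degf_le hf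
  have degi : ∀ x y : P, x ≤ y → (rinv f x y).natDegree ≤ r x y := degrinv_le hr hf
  have degbf : ∀ x y : P, x ≤ y → (bar r f x y).natDegree ≤ r x y :=
    fun x y h => natDegree_reflect_le (degf x y h)
  have hbb : bar r (bar r f) = f := funext fun a => funext fun b => reflect_reflect' _ _
  have hbarκ : ∀ u v : P, u ≤ v →
      bar r (conv (bar r f) (rinv f)) u v = conv f (bar r (rinv f)) u v := by
    intro u v huv
    rw [bar_conv hr degbf degi u v huv, hbb]
  refine ⟨rinv f, fun x y h => rinv_not_le f h,
    fun x z _ => congrFun (congrFun Hr x) z,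
    fun x z _ => congrFun (congrFun Hl x) z, ⟨?_, ?_, ?_, ?_⟩, ?_⟩
  · -- InS
    intro x z hxz
    refine Polynomial.natDegree_sum_le_of_forall_le _ _ fun y hy => ?_
    obtain ⟨h1, h2⟩ := Finset.mem_Icc.mp hy
    calc (bar r f x y * rinv f y z).natDegree
        ≤ (bar r f x y).natDegree + (rinv f y z).natDegree := Polynomial.natDegree_mul_le
      _ ≤ r x y + r y z := add_le_add (degbf x y h1) (degi y z h2)
      _ = r x z := hr.2 x y z h1 h2
  · -- diagonal 1
    intro x
    show ∑ y ∈ Finset.Icc x x, bar r f x y * rinv f y x = 1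
    rw [Finset.Icc_self, Finset.sum_singleton, rinv_self, mul_one]
    show (f x x).reflect (r x x) = 1
    rw [hf1, rank_self_eq_zero hr]
    exact reflect_zero' 1
  · -- κ * bar κ = delta
    intro x z hxz
    calc conv (conv (bar r f) (rinv f)) (bar r (conv (bar r f) (rinv f))) x z
        = conv (conv (bar r f) (rinv f)) (conv f (bar r (rinv f))) x z :=
          conv_congr_right fun y _ h2 => hbarκ y z h2
      _ = conv (bar r f) (conv (rinv f) (conv f (bar r (rinv f)))) x z :=
          conv_assoc _ _ _ _ _
      _ = conv (bar r f) (bar r (rinv f)) x z := by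
          refine conv_congr_right fun y h1 h2 => ?_
          rw [← conv_assoc, Hl]
          exact delta_conv _ h2
      _ = bar r (conv f (rinv f)) x z := (bar_conv hr degf degi x z hxz).symm
      _ = delta x z := by rw [Hr]; exact bar_delta hr x z
  · -- bar κ * κ = delta
    intro x z hxz
    calc conv (bar r (conv (bar r f) (rinv f))) (conv (bar r f) (rinv f)) x z
        = conv (conv f (bar r (rinv f))) (conv (bar r f) (rinv f)) x z :=
          conv_congr_left fun y h1 _ => hbarκ x y h1
      _ = conv f (conv (bar r (rinv f)) (conv (bar r f) (rinv f))) x z :=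
          conv_assoc _ _ _ _ _
      _ = conv f (rinv f) x z := by
          refine conv_congr_right fun y h1 h2 => ?_
          rw [← conv_assoc]
          calc conv (conv (bar r (rinv f)) (bar r f)) (rinv f) y z
              = conv (bar r (conv (rinv f) f)) (rinv f) y z :=
                conv_congr_left fun w hw1 _ => (bar_conv hr degi degf y w hw1).symm
            _ = conv delta (rinv f) y z := by
                refine conv_congr_left fun w hw1 _ => ?_
                rw [Hl]
                exact bar_delta hr y w
            _ = rinv f y z := delta_conv _ h2
      _ = delta x z := congrFun (congrFun Hr x) z
  · -- bar f = κ * f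
    intro x z hxz
    rw [conv_assoc, Hl]
    exact (conv_delta _ hxz).symm

end

end KLS
end

section
/- Let κ be a P-kernel with right KLS-function f and left KLS-function g. Suppose x ∈ P and h ∈ 𝒮_{1/2}(P) satisfy (h̄ f)_{xz}(t) = (h f̄)_{xz}(t) for all z ≥ x. Then h_{xz}(t) = g_{xz}(t) for all z ≥ x. -/
open Polynomial

namespace KLS

noncomputable section

variable {P : Type*} [PartialOrder P] [LocallyFiniteOrder P] [DecidableEq P]

/-- A polynomial fixed by `reflect n` with degree less than `n/2` is zero. -/
lemma eq_zero_of_reflect_fixed {p : Polynomial ℤ} {n : ℕ}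
    (hp : p.reflect n = p) (hd : 2 * p.natDegree < n) : p = 0 := by
  by_contra hne
  have hcoeff : p.coeff p.natDegree ≠ 0 := fun hcz => hne (by
    exact Polynomial.leadingCoeff_eq_zero.mp hcz)
  have hdn : p.natDegree ≤ n := by omega
  have hle : n - p.natDegree ≤ n := Nat.sub_le _ _
  have h2 : (p.reflect n).coeff (n - p.natDegree) = p.coeff p.natDegree := by
    rw [Polynomial.coeff_reflect, Polynomial.revAt_le hle, Nat.sub_sub_self hdn]
  rw [hp] at h2
  have h3 : p.coeff (n - p.natDegree) ≠ 0 := by rw [h2]; exact hcoeff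
  have := Polynomial.le_natDegree_of_ne_zero h3
  omega

/-- Exchange of summation for incidence convolutions. -/
lemma conv_swap (a b c : P → P → Polynomial ℤ) (x z : P) :
    ∑ y ∈ Finset.Icc x z, a x y * conv b c y z
      = ∑ w ∈ Finset.Icc x z, conv a b x w * c w z := by
  simp only [conv, Finset.mul_sum, Finset.sum_mul, mul_assoc]
  exact Finset.sum_comm' (fun y w => by
    simp only [Finset.mem_Icc]
    constructor
    · rintro ⟨⟨h1, h2⟩, h3, h4⟩; exact ⟨⟨h1, h3⟩, h1.trans h3, h4⟩
    · rintro ⟨⟨h1, h2⟩, h3, h4⟩; exact ⟨⟨h1, h2.trans h4⟩, h2, h4⟩)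

/-- if `(h̄ f)_{xz} = (h f̄)_{xz}` for all `z ≥ x`, then `h_{xz} = g_{xz}`
for all `z ≥ x`. -/
theorem stmt_11 {P : Type*} [PartialOrder P] [LocallyFiniteOrder P] [DecidableEq P]
    (r : P → P → ℕ) (hr : IsWeakRank r)
    (κ f g h : P → P → Polynomial ℤ) (hκ : IsKernel r κ)
    (hfhalf : InHalf r f) (hfsupp : Supported f)
    (hf : ∀ x z : P, x ≤ z → bar r f x z = conv κ f x z)
    (hghalf : InHalf r g) (hgsupp : Supported g)
    (hg : ∀ x z : P, x ≤ z → bar r g x z = conv g κ x z)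
    (x : P) (hhhalf : InHalf r h)
    (hyp : ∀ z : P, x ≤ z → conv (bar r h) f x z = conv h (bar r f) x z) :
    ∀ z : P, x ≤ z → h x z = g x z := by
  have hconv : ∀ z, x ≤ z →
      conv (bar r h) f x z = ∑ w ∈ Finset.Icc x z, conv h κ x w * f w z := by
    intro z hz
    rw [hyp z hz]
    have hmid : conv h (bar r f) x z = ∑ y ∈ Finset.Icc x z, h x y * conv κ f y z := by
      show ∑ y ∈ Finset.Icc x z, h x y * bar r f y z = _
      exact Finset.sum_congr rfl fun y hy => by
        rw [hf y z (Finset.mem_Icc.mp hy).2]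
    rw [hmid, conv_swap]
  have key1 : ∀ n : ℕ, ∀ z, x ≤ z → (Finset.Icc x z).card ≤ n →
      bar r h x z = conv h κ x z := by
    intro n
    induction n with
    | zero =>
      intro z hz hc
      have : z ∈ Finset.Icc x z := Finset.mem_Icc.mpr ⟨hz, le_refl z⟩
      have := Finset.card_pos.mpr ⟨z, this⟩
      omega
    | succ n ih =>
      intro z hz hc
      have h1 : ∑ y ∈ Finset.Icc x z, bar r h x y * f y z
          = ∑ w ∈ Finset.Icc x z, conv h κ x w * f w z := hconv z hz
      have hzmem : z ∈ Finset.Icc x z := Finset.mem_Icc.mpr ⟨hz, le_refl z⟩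
      rw [← Finset.add_sum_erase _ (fun y => bar r h x y * f y z) hzmem,
        ← Finset.add_sum_erase _ (fun w => conv h κ x w * f w z) hzmem] at h1
      have heq : ∑ y ∈ (Finset.Icc x z).erase z, bar r h x y * f y z
          = ∑ y ∈ (Finset.Icc x z).erase z, conv h κ x y * f y z := by
        apply Finset.sum_congr rfl
        intro y hy
        obtain ⟨hyz, hy'⟩ := Finset.mem_erase.mp hy
        obtain ⟨hxy, hyzle⟩ := Finset.mem_Icc.mp hy'
        have hylt : y < z := lt_of_le_of_ne hyzle hyz
        have hsub : Finset.Icc x y ⊂ Finset.Icc x z := by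
          refine ⟨Finset.Icc_subset_Icc_right hylt.le, fun hss => ?_⟩
          have := Finset.mem_Icc.mp (hss hzmem)
          exact absurd this.2 (not_le_of_gt hylt)
        have hcard : (Finset.Icc x y).card ≤ n := by
          have := Finset.card_lt_card hsub
          omega
        rw [ih y hxy hcard]
      rw [heq] at h1
      have h2 := add_right_cancel h1
      rwa [hfhalf.1 z, mul_one, mul_one] at h2
  have key2 : ∀ n : ℕ, ∀ z, x ≤ z → (Finset.Icc x z).card ≤ n → h x z = g x z := by
    intro n
    induction n with
    | zero =>
      intro z hz hc
      have : z ∈ Finset.Icc x z := Finset.mem_Icc.mpr ⟨hz, le_refl z⟩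
      have := Finset.card_pos.mpr ⟨z, this⟩
      omega
    | succ n ih =>
      intro z hz hc
      rcases eq_or_lt_of_le hz with rfl | hlt
      · rw [hhhalf.1, hghalf.1]
      · have h1 := key1 (n + 1) z hz hc
        have h2 := hg x z hz
        have hzmem : z ∈ Finset.Icc x z := Finset.mem_Icc.mpr ⟨hz, le_refl z⟩
        have hdiff : conv h κ x z - conv g κ x z = h x z - g x z := by
          unfold conv
          rw [← Finset.sum_sub_distrib]
          rw [← Finset.add_sum_erase _ (fun y => h x y * κ y z - g x y * κ y z) hzmem]
          have hrest : ∑ y ∈ (Finset.Icc x z).erase z,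
              (h x y * κ y z - g x y * κ y z) = 0 := by
            apply Finset.sum_eq_zero
            intro y hy
            obtain ⟨hyz, hy'⟩ := Finset.mem_erase.mp hy
            obtain ⟨hxy, hyzle⟩ := Finset.mem_Icc.mp hy'
            have hylt : y < z := lt_of_le_of_ne hyzle hyz
            have hsub : Finset.Icc x y ⊂ Finset.Icc x z := by
              refine ⟨Finset.Icc_subset_Icc_right hylt.le, fun hss => ?_⟩
              have := Finset.mem_Icc.mp (hss hzmem)
              exact absurd this.2 (not_le_of_gt hylt)
            have hcard : (Finset.Icc x y).card ≤ n := by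
              have := Finset.card_lt_card hsub
              omega
            rw [ih y hxy hcard, sub_self]
          rw [hrest, add_zero, hκ.2.1 z, mul_one, mul_one]
        have reflect_sub : ∀ (p q : Polynomial ℤ) (N : ℕ),
            (p - q).reflect N = p.reflect N - q.reflect N := by
          intro p q N
          rw [sub_eq_add_neg, Polynomial.reflect_add, sub_eq_add_neg]
          congr 1
          have hq : -q = Polynomial.C (-1 : ℤ) * q := by simp
          rw [hq, Polynomial.reflect_C_mul]
          simp
        have hbars : bar r h x z - bar r g x z = h x z - g x z := by
          rw [h1, h2, hdiff]
        have hrefl : (h x z - g x z).reflect (r x z) = h x z - g x z := by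
          rw [reflect_sub]
          exact hbars
        have hdeg : 2 * (h x z - g x z).natDegree < r x z := by
          have d1 := hhhalf.2 x z hlt
          have d2 := hghalf.2 x z hlt
          have := Polynomial.natDegree_sub_le (h x z) (g x z)
          omega
        exact sub_eq_zero.mp (eq_zero_of_reflect_fixed hrefl hdeg)
  intro z hz
  exact key2 (Finset.Icc x z).card z hz le_rfl
end
end KLS
end

section
/- For a weakly ranked poset P, define λ ∈ 𝒮(P) by λ_{xy}(t) = (t-1)^{r_{xy}}. Then λ is a P-kernel if and only if P is locally Eulerian, i.e., the Möbius function satisfies μ_{xy} = (-1)^{r_{xy}} for all x ≤ y. -/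
open Polynomial

namespace KLS

noncomputable section

variable {P : Type*} [PartialOrder P] [LocallyFiniteOrder P] [DecidableEq P]

set_option linter.unnecessarySimpa false in
lemma reflect_Xsub1_pow (n : ℕ) :
    ((X - 1 : Polynomial ℤ) ^ n).reflect n = (-1 : Polynomial ℤ) ^ n * (X - 1) ^ n := by
  induction n with
  | zero => simp
  | succ n ih =>
    have hd : ((X - 1 : Polynomial ℤ) ^ n).natDegree ≤ n := by
      refine (natDegree_pow_le).trans ?_
      have : (X - 1 : Polynomial ℤ).natDegree = 1 := by
        simpa using natDegree_X_sub_C (1 : ℤ)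
      simp [this]
    have h1 : ((X - 1 : Polynomial ℤ)).natDegree ≤ 1 := by
      simpa using (natDegree_X_sub_C (1 : ℤ)).le
    have hm := reflect_mul ((X - 1 : Polynomial ℤ) ^ n) (X - 1) hd h1
    rw [pow_succ, hm, ih]
    have hr1 : ((X - 1 : Polynomial ℤ)).reflect 1 = 1 - X := by
      rw [reflect_sub]
      have hX : (X : Polynomial ℤ).reflect 1 = 1 := by
        simpa using reflect_monomial 1 1 (R := ℤ)
      have h1' : (1 : Polynomial ℤ).reflect 1 = X := by
        simpa using reflect_C (1 : ℤ) 1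
      rw [hX, h1']
    rw [hr1]; ring

/-- `λ_{xy}(t) = (t-1)^{r_{xy}}` is a `P`-kernel iff `P` is locally
Eulerian, i.e. `μ_{xy} = (-1)^{r_{xy}}`. -/
theorem stmt_16 {P : Type*} [PartialOrder P] [LocallyFiniteOrder P] [DecidableEq P]
    (r : P → P → ℕ) (hr : IsWeakRank r)
    (μ : P → P → Polynomial ℤ)
    (hμ₁ : ∀ x z : P, x ≤ z →
      conv (fun _ _ => (1 : Polynomial ℤ)) μ x z = delta x z)
    (hμ₂ : ∀ x z : P, x ≤ z →
      conv μ (fun _ _ => (1 : Polynomial ℤ)) x z = delta x z) :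
    IsKernel r (fun x y => (X - 1 : Polynomial ℤ) ^ (r x y)) ↔
      ∀ x y : P, x ≤ y → μ x y = (-1 : Polynomial ℤ) ^ (r x y) := by
  have hXne : (X - 1 : Polynomial ℤ) ≠ 0 := by
    simpa using X_sub_C_ne_zero (1 : ℤ)
  have hrxx : ∀ x : P, r x x = 0 := by
    intro x
    have := hr.2 x x x le_rfl le_rfl
    omega
  set S : P → P → Polynomial ℤ :=
    fun x z => ∑ y ∈ Finset.Icc x z, (-1 : Polynomial ℤ) ^ (r y z) with hS
  have hSxx : ∀ x : P, S x x = 1 := by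
    intro x; simp [hS, Finset.Icc_self, hrxx]
  -- formula 1
  have hF1 : ∀ x z : P, x ≤ z →
      conv (fun x y => (X - 1 : Polynomial ℤ) ^ (r x y))
        (bar r (fun x y => (X - 1 : Polynomial ℤ) ^ (r x y))) x z
        = (X - 1) ^ (r x z) * S x z := by
    intro x z _
    unfold conv bar
    rw [hS, Finset.mul_sum]
    refine Finset.sum_congr rfl ?_
    intro y hy
    rw [Finset.mem_Icc] at hy
    rw [reflect_Xsub1_pow, ← hr.2 x y z hy.1 hy.2, pow_add]
    ring
  -- formula 2
  have hF2 : ∀ x z : P, x ≤ z →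
      conv (bar r (fun x y => (X - 1 : Polynomial ℤ) ^ (r x y)))
        (fun x y => (X - 1 : Polynomial ℤ) ^ (r x y)) x z
        = (-1) ^ (r x z) * ((X - 1) ^ (r x z) * S x z) := by
    intro x z _
    unfold conv bar
    rw [hS, Finset.mul_sum, Finset.mul_sum]
    refine Finset.sum_congr rfl ?_
    intro y hy
    rw [Finset.mem_Icc] at hy
    have h2 : ((-1 : Polynomial ℤ)) ^ (r y z) * (-1) ^ (r y z) = 1 := by
      rw [← pow_add]; exact Even.neg_one_pow ⟨r y z, rfl⟩
    rw [reflect_Xsub1_pow, ← hr.2 x y z hy.1 hy.2, pow_add, pow_add]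
    linear_combination (-(((-1 : Polynomial ℤ)) ^ (r x y) * (X - 1) ^ (r x y) *
      (X - 1) ^ (r y z))) * h2
  -- Eulerian condition on S implies μ = (-1)^r
  have hmu_of_E : (∀ x z : P, x ≤ z → S x z = delta x z) →
      ∀ x y : P, x ≤ y → μ x y = (-1 : Polynomial ℤ) ^ (r x y) := by
    intro hE
    have key : ∀ n : ℕ, ∀ x y : P, (Finset.Icc x y).card ≤ n → x ≤ y →
        μ x y = (-1 : Polynomial ℤ) ^ (r x y) := by
      intro n
      induction n with
      | zero =>
        intro x y hc hxy
        have : x ∈ Finset.Icc x y := Finset.mem_Icc.mpr ⟨le_rfl, hxy⟩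
        have := Finset.card_pos.mpr ⟨x, this⟩
        omega
      | succ n ih =>
        intro x z hc hxz
        rcases eq_or_lt_of_le hxz with h | h
        · subst h
          have h1 := hμ₁ x x le_rfl
          unfold conv delta at h1
          simpa [Finset.Icc_self, hrxx] using h1
        · -- split the sums
          have hins : Finset.Icc x z = insert x (Finset.Ioc x z) := by
            rw [Finset.Icc_eq_cons_Ioc hxz, Finset.cons_eq_insert]
          have hxnot : x ∉ Finset.Ioc x z := by simp
          have hIH : ∀ y ∈ Finset.Ioc x z, μ y z = (-1 : Polynomial ℤ) ^ (r y z) := by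
            intro y hy
            rw [Finset.mem_Ioc] at hy
            refine ih y z ?_ hy.2
            have hsub : Finset.Icc y z ⊆ Finset.Icc x z :=
              Finset.Icc_subset_Icc hy.1.le le_rfl
            have hlt : (Finset.Icc y z).card < (Finset.Icc x z).card := by
              refine Finset.card_lt_card ⟨hsub, fun hcon => ?_⟩
              have := hcon (Finset.mem_Icc.mpr ⟨le_rfl, hxz⟩)
              rw [Finset.mem_Icc] at this
              exact absurd this.1 hy.1.not_ge
            omega
          have h1 := hμ₁ x z hxz
          unfold conv delta at h1
          rw [if_neg h.ne, hins, Finset.sum_insert hxnot] at h1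
          have hE1 : (-1 : Polynomial ℤ) ^ (r x z)
              + ∑ y ∈ Finset.Ioc x z, (-1 : Polynomial ℤ) ^ (r y z) = 0 := by
            have hE0 := hE x z hxz
            unfold delta at hE0
            rw [if_neg h.ne] at hE0
            have : (∑ y ∈ Finset.Icc x z, (-1 : Polynomial ℤ) ^ (r y z)) = 0 := hE0
            rwa [hins, Finset.sum_insert hxnot] at this
          rw [Finset.sum_congr rfl (fun y hy => by rw [one_mul, hIH y hy])] at h1
          rw [one_mul] at h1
          linear_combination h1 - hE1
    intro x y hxy
    exact key (Finset.Icc x y).card x y le_rfl hxy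
  constructor
  · rintro ⟨_, _, hk1, _⟩
    refine hmu_of_E ?_
    intro x z hxz
    rcases eq_or_lt_of_le hxz with h | h
    · subst h; rw [hSxx]; simp [delta]
    · have := hk1 x z hxz
      rw [hF1 x z hxz] at this
      unfold delta at this
      rw [if_neg h.ne] at this
      have hz : S x z = 0 :=
        (mul_eq_zero.mp this).resolve_left (pow_ne_zero _ hXne)
      rw [hz]; unfold delta; rw [if_neg h.ne]
  · intro hmu
    -- first derive E from hμ₁
    have hE : ∀ x z : P, x ≤ z → S x z = delta x z := by
      intro x z hxz
      have h1 := hμ₁ x z hxz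
      unfold conv at h1
      rw [← h1]
      show (∑ y ∈ Finset.Icc x z, (-1 : Polynomial ℤ) ^ (r y z)) = _
      refine Finset.sum_congr rfl ?_
      intro y hy
      rw [Finset.mem_Icc] at hy
      rw [one_mul, hmu y z hy.2]
    refine ⟨?_, ?_, ?_, ?_⟩
    · intro x y _
      refine (natDegree_pow_le).trans ?_
      have : (X - 1 : Polynomial ℤ).natDegree = 1 := by
        simpa using natDegree_X_sub_C (1 : ℤ)
      simp [this]
    · intro x
      show (X - 1 : Polynomial ℤ) ^ (r x x) = 1
      rw [hrxx x, pow_zero]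
    · intro x z hxz
      rw [hF1 x z hxz, hE x z hxz]
      unfold delta
      by_cases h : x = z
      · subst h; rw [if_pos rfl, hrxx]; simp
      · rw [if_neg h]; simp
    · intro x z hxz
      rw [hF2 x z hxz, hE x z hxz]
      unfold delta
      by_cases h : x = z
      · subst h; rw [if_pos rfl, hrxx]; simp
      · rw [if_neg h]; simp
end
end KLS
end
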